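/- arXiv:1903.11817 — 11 statements merged into one kernel-verified Lean document; each statement's English description precedes it below -/
import Mathlib

section
/- Let a1 ≤ a2 ≤ a3 and b1, b2, b3 be real numbers with a1 + a2 + a3 = 1, b1 + b2 + b3 = 0, |b2 - b1| ≤ a2 - a1, |b3 - b1| ≤ a3 - a1, and |b3 - b2| ≤ a3 - a2. Then |b2| ≤ (a3 - a1)/3. -/
theorem stmt_0 (a1 a2 a3 b1 b2 b3 : ℝ)
    (h12 : a1 ≤ a2) (h23 : a2 ≤ a3)
    (ha : a1 + a2 + a3 = 1) (hb : b1 + b2 + b3 = 0)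
    (h1 : |b2 - b1| ≤ a2 - a1) (h2 : |b3 - b1| ≤ a3 - a1)
    (h3 : |b3 - b2| ≤ a3 - a2) :
    |b2| ≤ (a3 - a1) / 3 := by
  rw [abs_le] at *
  constructor <;> linarith [h1.1, h1.2, h3.1, h3.2]
end

section
/- Let a1 ≤ a2 ≤ a3 and b1, b2, b3 be real numbers with a1 + a2 + a3 = 1, b1 + b2 + b3 = 0, |b2 - b1| ≤ a2 - a1, |b3 - b1| ≤ a3 - a1, |b3 - b2| ≤ a3 - a2, and a1 > 1/12. Then 2·a1 + a2 + b2 > 0 and 2·a1 + a2 - b2 > 0. -/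
theorem stmt_1 (a1 a2 a3 b1 b2 b3 : ℝ)
    (h12 : a1 ≤ a2) (h23 : a2 ≤ a3)
    (ha : a1 + a2 + a3 = 1) (hb : b1 + b2 + b3 = 0)
    (h1 : |b2 - b1| ≤ a2 - a1) (h2 : |b3 - b1| ≤ a3 - a1)
    (h3 : |b3 - b2| ≤ a3 - a2) (h4 : a1 > 1/12) :
    2*a1 + a2 + b2 > 0 ∧ 2*a1 + a2 - b2 > 0 := by
  rw [abs_le] at h1 h2 h3
  constructor <;> linarith [h1.1, h1.2, h3.1, h3.2]
end

section
/- Let a1, a2, a3, b1, b2, b3 be real numbers with a1 ≤ a2 ≤ a3, a1 + a2 + a3 = 1, a1 + b1 ≤ a2 + b2 ≤ a3 + b3, a1 - b1 ≤ a2 - b2 ≤ a3 - b3, a1^2 + b1^2 + 2(a2·a3 + b2·b3) ≤ a1, and suppose a2 + b2 > 0, a2 - b2 > 0, a3 + b3 > 0, a3 - b3 > 0. Then a1 > 0. -/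
theorem stmt_2 (a1 a2 a3 b1 b2 b3 : ℝ)
    (h12 : a1 ≤ a2) (h23 : a2 ≤ a3)
    (ha : a1 + a2 + a3 = 1)
    (hp12 : a1 + b1 ≤ a2 + b2) (hp23 : a2 + b2 ≤ a3 + b3)
    (hm12 : a1 - b1 ≤ a2 - b2) (hm23 : a2 - b2 ≤ a3 - b3)
    (hmax : a1^2 + b1^2 + 2*(a2*a3 + b2*b3) ≤ a1)
    (h1 : a2 + b2 > 0) (h2 : a2 - b2 > 0)
    (h3 : a3 + b3 > 0) (h4 : a3 - b3 > 0) :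
    a1 > 0 := by
  nlinarith [mul_pos h1 h3, mul_pos h2 h4, sq_nonneg a1, sq_nonneg b1]
end

section
/- Let a1, a2, a3, b1, b2, b3 be real numbers with a1 ≤ a2 ≤ a3, a1 + a2 + a3 = 1, a1 + b1 ≤ a2 + b2 ≤ a3 + b3, a1 - b1 ≤ a2 - b2 ≤ a3 - b3, a1^2 + b1^2 + 2(a2·a3 + b2·b3) ≤ a1, and suppose 2·a1 + a2 + b2 > 0, 2·a1 + a2 - b2 > 0, 2·a1 + a3 + b3 > 0, 2·a1 + a3 - b3 > 0. Then a1 > 0. -/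
theorem stmt_3 (a1 a2 a3 b1 b2 b3 : ℝ)
    (h12 : a1 ≤ a2) (h23 : a2 ≤ a3)
    (ha : a1 + a2 + a3 = 1)
    (hp12 : a1 + b1 ≤ a2 + b2) (hp23 : a2 + b2 ≤ a3 + b3)
    (hm12 : a1 - b1 ≤ a2 - b2) (hm23 : a2 - b2 ≤ a3 - b3)
    (hmax : a1^2 + b1^2 + 2*(a2*a3 + b2*b3) ≤ a1)
    (h1 : 2*a1 + a2 + b2 > 0) (h2 : 2*a1 + a2 - b2 > 0)
    (h3 : 2*a1 + a3 + b3 > 0) (h4 : 2*a1 + a3 - b3 > 0) :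
    a1 > 0 := by
  by_contra hc
  push_neg at hc
  nlinarith [mul_pos h1 h3, mul_pos h2 h4, sq_nonneg b1, mul_pos h1 h4, mul_pos h2 h3]
end

section
/- Let a1, a2, a3, b1, b2, b3 be real numbers with a1 ≤ a2 ≤ a3, a1 + a2 + a3 = 1, b1 + b2 + b3 = 0, |b3 - b2| ≤ a3 - a2, a1 + b1 ≤ a2 + b2 ≤ a3 + b3, a1 - b1 ≤ a2 - b2 ≤ a3 - b3, a1^2 + b1^2 + 2(a2·a3 + b2·b3) ≤ a1, and suppose 2·a1 + a2 + b2 > 0, 2·a1 + a2 - b2 > 0. Then a1 > 1/30. -/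
set_option maxHeartbeats 1000000 in
theorem stmt_4 (a1 a2 a3 b1 b2 b3 : ℝ)
    (h12 : a1 ≤ a2) (h23 : a2 ≤ a3)
    (ha : a1 + a2 + a3 = 1) (hb : b1 + b2 + b3 = 0)
    (hB : |b3 - b2| ≤ a3 - a2)
    (hp12 : a1 + b1 ≤ a2 + b2) (hp23 : a2 + b2 ≤ a3 + b3)
    (hm12 : a1 - b1 ≤ a2 - b2) (hm23 : a2 - b2 ≤ a3 - b3)
    (hmax : a1^2 + b1^2 + 2*(a2*a3 + b2*b3) ≤ a1)
    (h1 : 2*a1 + a2 + b2 > 0) (h2 : 2*a1 + a2 - b2 > 0) :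
    a1 > 1/30 := by
  by_contra hc
  push_neg at hc
  have ha3 : a3 = 1 - a1 - a2 := by linarith
  have hb3 : b3 = -b1 - b2 := by linarith
  subst ha3 hb3
  obtain ⟨hB1, hB2⟩ := abs_le.mp hB
  -- key: rearranged hmax
  have key : a1 + 2*(a2-a1) ≤ 3*a1^2 + 3*b2^2 - (b2-b1)^2 + 2*(a2-a1)^2 + 6*a1*(a2-a1) := by
    nlinarith [hmax]
  have hn : 0 < 3*a1 + (a2 - a1) := by linarith
  rcases le_or_gt (a2 - a1) (1/5) with hu | hu
  · nlinarith [key, mul_pos h1 h2, sq_nonneg (b2-b1),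
      mul_nonneg (by linarith : (0:ℝ) ≤ 1/5 - (a2-a1)) hn.le,
      mul_nonneg (by linarith : (0:ℝ) ≤ 1/30 - a1) hn.le,
      mul_nonneg (by linarith : (0:ℝ) ≤ 1/30 - a1) (by linarith : (0:ℝ) ≤ 1/5 - (a2-a1)),
      mul_nonneg (by linarith : (0:ℝ) ≤ a2-a1) (by linarith : (0:ℝ) ≤ 1/5 - (a2-a1))]
  · -- m = 1-3a1-2(a2-a1) ≥ 0, |b1+2b2| ≤ m, |b2-b1| ≤ a2-a1
    have hm : (0:ℝ) ≤ 1 - 3*a1 - 2*(a2-a1) := by linarith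
    have ht1 : (0:ℝ) ≤ (a2-a1) - (b2-b1) := by linarith
    have ht2 : (0:ℝ) ≤ (a2-a1) + (b2-b1) := by linarith
    have hw1 : (0:ℝ) ≤ (1 - 3*a1 - 2*(a2-a1)) - (b1 + 2*b2) := by linarith
    have hw2 : (0:ℝ) ≤ (1 - 3*a1 - 2*(a2-a1)) + (b1 + 2*b2) := by linarith
    nlinarith [key, mul_pos h1 h2, mul_nonneg hw1 hw2, mul_nonneg ht1 hw2, mul_nonneg ht2 hw1,
      mul_nonneg (by linarith : (0:ℝ) ≤ (a2-a1) - 1/5) hm,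
      mul_nonneg (by linarith : (0:ℝ) ≤ (a2-a1) - 1/5) hn.le,
      mul_nonneg (by linarith : (0:ℝ) ≤ 1/30 - a1) hm,
      mul_nonneg (by linarith : (0:ℝ) ≤ 1/30 - a1) hn.le,
      mul_nonneg (by linarith : (0:ℝ) ≤ (a2-a1) - 1/5) (by linarith : (0:ℝ) ≤ 1/30 - a1),
      mul_nonneg hm hn.le, sq_nonneg (1 - 3*a1 - 2*(a2-a1)), sq_nonneg (a2-a1-1/5)]
end

section
/- Let a1, a2, a3, b1, b2, b3 be real numbers with a1 ≤ a2 ≤ a3, a1 + a2 + a3 = 1, b1 + b2 + b3 = 0, |b3 - b2| ≤ a3 - a2, a1^2 + b1^2 + 2(a2·a3 + b2·b3) ≤ a1, and a1 + a2 > 0. Then a1 > 4 - √17. -/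
set_option maxHeartbeats 1000000


theorem stmt_5 (a1 a2 a3 b1 b2 b3 : ℝ)
    (h12 : a1 ≤ a2) (h23 : a2 ≤ a3)
    (ha : a1 + a2 + a3 = 1) (hb : b1 + b2 + b3 = 0)
    (hB : |b3 - b2| ≤ a3 - a2)
    (hmax : a1^2 + b1^2 + 2*(a2*a3 + b2*b3) ≤ a1)
    (hpos : a1 + a2 > 0) :
    a1 > 4 - Real.sqrt 17 := by
  by_contra h
  push_neg at h
  have hs : Real.sqrt 17 ^ 2 = 17 := Real.sq_sqrt (by norm_num)
  have hs4 : Real.sqrt 17 ≥ 4 := by nlinarith [Real.sqrt_nonneg 17]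
  obtain ⟨hB1, hB2⟩ := abs_le.mp hB
  have hb1 : b1 = -(b2 + b3) := by linarith
  -- b1^2 + 2 b2 b3 ≥ -((b3-b2)^2)/2
  have hkey : b1^2 + 2*(b2*b3) ≥ -((b3 - b2)^2)/2 := by
    have : (3/2) * (b2 + b3)^2 ≥ 0 := by positivity
    nlinarith [this]
  have hbt : (b3 - b2)^2 ≤ (a3 - a2)^2 := by nlinarith
  -- so t² ≥ (3a1²-4a1+1)/2 where t = a3-a2
  have ht : (a3 - a2)^2 ≥ (3*a1^2 - 4*a1 + 1)/2 := by nlinarith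
  have htpos : a3 - a2 < 1 + a1 := by linarith
  have ht0 : 0 ≤ a3 - a2 := by linarith
  have hq : a1^2 - 8*a1 - 1 ≥ 0 := by
    nlinarith [mul_nonneg (sub_nonneg.mpr h) (by nlinarith : (4 + Real.sqrt 17) - a1 ≥ 0)]
  have hsq : (a3 - a2)^2 < (1 + a1)^2 := by
    nlinarith [mul_pos (by linarith : (0:ℝ) < 1 + a1 - (a3 - a2)) (by linarith : (0:ℝ) < 1 + a1 + (a3 - a2))]
  nlinarith [hsq, ht, hq]
end

section
/- Let λ1 ≤ λ2 ≤ λ3 be real numbers with λ1 + λ2 + λ3 = 1 and λ1^2 + 2·λ2·λ3 ≤ λ1. Then 2·λ1 ≥ 2·λ3 + 1 - √(12·λ3^2 + 4·λ3 + 1). -/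
theorem stmt_12 (l1 l2 l3 : ℝ)
    (h12 : l1 ≤ l2) (h23 : l2 ≤ l3)
    (hsum : l1 + l2 + l3 = 1)
    (hmax : l1^2 + 2*l2*l3 ≤ l1) :
    2*l1 ≥ 2*l3 + 1 - Real.sqrt (12*l3^2 + 4*l3 + 1) := by
  have hd : (0:ℝ) ≤ 12*l3^2 + 4*l3 + 1 := by nlinarith [sq_nonneg (6*l3+1)]
  have hs := Real.sq_sqrt hd
  have hs0 := Real.sqrt_nonneg (12*l3^2 + 4*l3 + 1)
  have h3 : l3 ≥ 1/3 := by linarith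
  nlinarith [hs, hs0, hmax, h3, sq_nonneg (Real.sqrt (12*l3^2 + 4*l3 + 1) + (2*l3 + 1 - 2*l1))]
end

section
/- Let a1, a2, a3, b1, b2, b3 be real numbers with a1 ≤ a2 ≤ a3, a1 + a2 + a3 = 1, b1 + b2 + b3 = 0, |b2 - b1| ≤ a2 - a1, |b3 - b2| ≤ a3 - a2, a1^2 + b1^2 + 2(a2·a3 + b2·b3) ≤ a1, and a3 < (14 - √19)/12. Then a1 > (5 - √19)/12. -/
private lemma aux_qB (u v d2 : ℝ) (h1 : -d2 ≤ v) (h2 : v ≤ d2) :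
    -(2*u^2 + 2*u*v - v^2)/3 ≤ d2^2/2 := by
  nlinarith [sq_nonneg (2*u+v), mul_nonneg (by linarith : (0:ℝ) ≤ v + d2) (by linarith : (0:ℝ) ≤ d2 - v)]

private lemma aux_qA (u v d1 d2 : ℝ) (hu1 : -d1 ≤ u) (hu2 : u ≤ d1)
    (hv1 : -d2 ≤ v) (hv2 : v ≤ d2) (hc : 2*d1 ≤ d2) :
    -(2*u^2 + 2*u*v - v^2)/3 ≤ (-2*d1^2 + 2*d1*d2 + d2^2)/3 := by
  have hC : (0:ℝ) ≤ d1 + u := by linarith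
  have hC' : (0:ℝ) ≤ d1 - u := by linarith
  have hD : (0:ℝ) ≤ d2 - v := by linarith
  have hD' : (0:ℝ) ≤ d2 + v := by linarith
  rcases le_or_gt (2*(d1+u)) (d2-v) with h | h
  · nlinarith [mul_nonneg hD' (by linarith : (0:ℝ) ≤ (d2-v) + (d1+u)),
      mul_nonneg hC' (by linarith : (0:ℝ) ≤ (d2-v) - 2*(d1+u))]
  · nlinarith [mul_nonneg hD (by linarith : (0:ℝ) ≤ (d2+v) + (d1-u)),
      mul_nonneg hC (by linarith : (0:ℝ) ≤ (d2+v) - 2*(d1-u))]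

set_option maxHeartbeats 1000000 in
private lemma aux_finB (x y z s : ℝ) (hs2 : s^2 = 19) (hs4 : 4 < s) (hs5 : s < 5)
    (hsum : x + y + z = 1) (hx : x ≤ (5-s)/12) (hz : z < (14-s)/12)
    (h12 : x ≤ y) (h23 : y ≤ z) (hcc : z - y ≤ 2*(y-x))
    (hF : 0 ≤ x - x^2 - 2*y*z + (z-y)^2/2) : False := by
  have hy : y = 1 - x - z := by linarith
  subst hy
  have hx1 : x ≤ 1/12 := by linarith
  have hz1 : 11/24 ≤ z := by linarith
  have hz2 : z < 5/6 := by linarith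
  have h1 : (0:ℝ) ≤ (3 - 5*x - 4*z)*(44*z - 5*x - 3) :=
    mul_nonneg (by linarith) (by linarith)
  have h2 : (0:ℝ) < (3*z - 1)*(2 - z) := mul_pos (by linarith) (by linarith)
  nlinarith [h1, h2, hF]

set_option maxHeartbeats 1000000 in
private lemma aux_finA (x y z s : ℝ) (hs2 : s^2 = 19) (hs4 : 4 < s) (hs5 : s < 5)
    (hsum : x + y + z = 1) (hx : x ≤ (5-s)/12) (hz : z < (14-s)/12)
    (h12 : x ≤ y) (h23 : y ≤ z)
    (hF : 0 ≤ x - x^2 - 2*y*z + (-2*(y-x)^2 + 2*(y-x)*(z-y) + (z-y)^2)/3) : False := by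
  have hy : y = 1 - x - z := by linarith
  subst hy
  have hA : (0:ℝ) ≤ (5-s)/12 - x := by linarith
  have hB : (0:ℝ) < (14-s)/12 - z := by linarith
  have hz1 : (0:ℝ) ≤ 3*z - 1 := by nlinarith
  nlinarith [sq_nonneg ((5-s)/12 - x), mul_nonneg hA hB.le,
    mul_nonneg hB.le hz1, hB, mul_nonneg hA hz1, hF, hs2]

theorem stmt_15 (a1 a2 a3 b1 b2 b3 : ℝ)
    (h12 : a1 ≤ a2) (h23 : a2 ≤ a3)
    (ha : a1 + a2 + a3 = 1) (hb : b1 + b2 + b3 = 0)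
    (hB1 : |b2 - b1| ≤ a2 - a1) (hB3 : |b3 - b2| ≤ a3 - a2)
    (hmax : a1^2 + b1^2 + 2*(a2*a3 + b2*b3) ≤ a1)
    (hub : a3 < (14 - Real.sqrt 19)/12) :
    a1 > (5 - Real.sqrt 19)/12 := by
  set s := Real.sqrt 19 with hs
  have hs2 : s^2 = 19 := Real.sq_sqrt (by norm_num)
  have hs0 : 0 ≤ s := Real.sqrt_nonneg 19
  have hs4 : 4 < s := by nlinarith
  have hs5 : s < 5 := by nlinarith
  obtain ⟨hB1a, hB1b⟩ := abs_le.mp hB1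
  obtain ⟨hB3a, hB3b⟩ := abs_le.mp hB3
  have hmax' : a1^2 + 2*a2*a3 + (2*(b2-b1)^2 + 2*(b2-b1)*(b3-b2) - (b3-b2)^2)/3 ≤ a1 := by
    nlinarith [hmax, hb, sq_nonneg (b1+b2+b3)]
  by_contra h
  push_neg at h
  rcases le_or_gt (2*(a2-a1)) (a3-a2) with hc | hc
  · have hq := aux_qA (b2-b1) (b3-b2) (a2-a1) (a3-a2) (by linarith) (by linarith)
      (by linarith) (by linarith) hc
    refine aux_finA a1 a2 a3 s hs2 hs4 hs5 ha h hub h12 h23 ?_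
    linarith [hmax', hq]
  · have hq := aux_qB (b2-b1) (b3-b2) (a3-a2) (by linarith) (by linarith)
    refine aux_finB a1 a2 a3 s hs2 hs4 hs5 ha h hub h12 h23 (by linarith) ?_
    linarith [hmax', hq]
end

section
/- Let λ1 ≤ λ2 ≤ λ3 and μ1 ≤ μ2 ≤ μ3 be real numbers with λ1 + λ2 + λ3 = 1, μ1 + μ2 + μ3 = 1, λ3 + μ3 < (14 - √19)/6, λ1 + μ1 > (5 - √19)/6, and μ1^2 + 2·μ2·μ3 - λ3^2 - 2·λ1·λ2 ≤ μ1 - λ3. Then 1 + μ1 - λ3 > 0. -/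
theorem stmt_16 (l1 l2 l3 m1 m2 m3 : ℝ)
    (hl12 : l1 ≤ l2) (hl23 : l2 ≤ l3)
    (hm12 : m1 ≤ m2) (hm23 : m2 ≤ m3)
    (hlsum : l1 + l2 + l3 = 1) (hmsum : m1 + m2 + m3 = 1)
    (hub : l3 + m3 < (14 - Real.sqrt 19)/6)
    (hlb : l1 + m1 > (5 - Real.sqrt 19)/6)
    (hmax : m1^2 + 2*m2*m3 - l3^2 - 2*l1*l2 ≤ m1 - l3) :
    1 + m1 - l3 > 0 := by
  set s := Real.sqrt 19 with hs
  have hs2 : s^2 = 19 := Real.sq_sqrt (by norm_num)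
  have hs4 : 4 < s := by nlinarith [Real.sqrt_nonneg 19]
  have hs5 : s < 4.4 := by nlinarith [Real.sqrt_nonneg 19]
  by_contra h
  push_neg at h
  nlinarith [sq_nonneg (l3 - m1 - 1), sq_nonneg (m2 - m3), sq_nonneg (l1 - l2), sq_nonneg (l1 + m1 - (5-s)/6), mul_pos (sub_pos.2 hlb) (sub_pos.2 hub), sq_nonneg (m2 + m3), sq_nonneg (l1 + l2), mul_nonneg (sub_nonneg.2 hl12) (sub_nonneg.2 hm12), sq_nonneg (m1 - l3), sq_nonneg (l3 + m3 - (14-s)/6)]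
end

section
/- Let a1, a2, a3, b1, b2, b3 be real numbers with a1 ≤ a2 ≤ a3, a1 + a2 + a3 = 1, b1 + b2 + b3 = 0, |b3 - b2| ≤ a3 - a2, a1^2 + b1^2 + 2(a2·a3 + b2·b3) ≤ a1, b2 < 0 ≤ b3, |b2| < a2 + 2·a1, and a2 = k·a1 with k ≥ 1 and a1 > 0. Then a1 > (2k - 1)/(5k^2 + 14k + 11). -/
theorem stmt_17 (a1 a2 a3 b1 b2 b3 k : ℝ)
    (h12 : a1 ≤ a2) (h23 : a2 ≤ a3)
    (ha : a1 + a2 + a3 = 1) (hb : b1 + b2 + b3 = 0)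
    (hB : |b3 - b2| ≤ a3 - a2)
    (hmax : a1^2 + b1^2 + 2*(a2*a3 + b2*b3) ≤ a1)
    (hb2 : b2 < 0) (hb3 : 0 ≤ b3)
    (hb2bound : |b2| < a2 + 2*a1)
    (hk : a2 = k * a1) (hk1 : k ≥ 1) (ha1 : a1 > 0) :
    a1 > (2*k - 1)/(5*k^2 + 14*k + 11) := by
  have habs : -b2 < a2 + 2*a1 := by
    have := abs_of_neg hb2; linarith [hb2bound, this.symm.le.trans hb2bound.le]
  have hd : (0:ℝ) < 5*k^2 + 14*k + 11 := by nlinarith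
  rw [gt_iff_lt, div_lt_iff₀ hd]
  have hb1 : b1 = -b2 - b3 := by linarith
  have hsq : b2^2 < (a2 + 2*a1)^2 := by nlinarith
  have ha3 : a3 = 1 - a1 - a2 := by linarith
  subst hb1 ha3 hk
  nlinarith [sq_nonneg (b3 + 2*b2), sq_nonneg a1, mul_pos ha1 ha1, sq_nonneg (b3+b2)]
end

section
/- Let a1, a2, a3, b1, b2, b3 be real numbers with a1 ≤ a2 ≤ a3, a1 + a2 + a3 = 1, b1 + b2 + b3 = 0, |b3 - b2| ≤ a3 - a2, a1^2 + b1^2 + 2(a2·a3 + b2·b3) ≤ a1, a2 = k·a1 with k ≥ 1, and a1 > 0. Then either a1 ≤ (4k - √(8k^2 - 8k + 1))/(8k^2 + 8k - 1) or a1 ≥ (4k + √(8k^2 - 8k + 1))/(8k^2 + 8k - 1). -/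
theorem stmt_18 (a1 a2 a3 b1 b2 b3 k : ℝ)
    (h12 : a1 ≤ a2) (h23 : a2 ≤ a3)
    (ha : a1 + a2 + a3 = 1) (hb : b1 + b2 + b3 = 0)
    (hB : |b3 - b2| ≤ a3 - a2)
    (hmax : a1^2 + b1^2 + 2*(a2*a3 + b2*b3) ≤ a1)
    (hk : a2 = k * a1) (hk1 : k ≥ 1) (ha1 : a1 > 0) :
    a1 ≤ (4*k - Real.sqrt (8*k^2 - 8*k + 1))/(8*k^2 + 8*k - 1) ∨
    a1 ≥ (4*k + Real.sqrt (8*k^2 - 8*k + 1))/(8*k^2 + 8*k - 1) := by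
  have hD : (0:ℝ) ≤ 8*k^2 - 8*k + 1 := by nlinarith
  set s := Real.sqrt (8*k^2 - 8*k + 1) with hs
  have hs0 : 0 ≤ s := Real.sqrt_nonneg _
  have hs2 : s^2 = 8*k^2 - 8*k + 1 := Real.sq_sqrt hD
  have hA : (0:ℝ) < 8*k^2 + 8*k - 1 := by nlinarith
  have habs := abs_le.mp hB
  have h1 : (b3 - b2)^2 ≤ (a3 - a2)^2 := sq_le_sq' habs.1 habs.2
  have hb1 : b1 = -(b2 + b3) := by linarith
  have ha3 : a3 = 1 - a1 - a2 := by linarith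
  have hQ : (8*k^2 + 8*k - 1) * a1^2 - 8*k*a1 + 1 ≥ 0 := by
    nlinarith [sq_nonneg (b2 + b3), h1, hmax]
  by_contra hcon
  push_neg at hcon
  obtain ⟨hl, hr⟩ := hcon
  rw [div_lt_iff₀ hA] at hl
  rw [lt_div_iff₀ hA] at hr
  nlinarith [mul_pos (sub_pos.mpr hl) (sub_pos.mpr hr)]
end
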